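/- arXiv:math-ph/0010050 — 2 statements merged into one kernel-verified Lean document; each statement's English description precedes it below -/
import Mathlib

section
/- For a closed subset T of ℝ^d and translations: the map a ↦ T + a from ℝ^d to the space of closed subsets of ℝ^d equipped with the metric D is continuous. -/
/-- The `r`-patch of a set `T`. -/
def patch {d : ℕ} (T : Set (EuclideanSpace ℝ (Fin d))) (r : ℝ) :
    Set (EuclideanSpace ℝ (Fin d)) :=
  (Metric.closedBall 0 r ∩ T) ∪ Metric.sphere 0 r

/-- The pattern distance. -/
noncomputable def patternDist {d : ℕ} (T T' : Set (EuclideanSpace ℝ (Fin d))) : ℝ :=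
  sInf {s : ℝ | ∃ r : ℝ, 0 < r ∧ s = 1 / (r + 1) ∧
    Metric.hausdorffDist (patch T r) (patch T' r) < 1 / r}

/-- The translation of a set `T` by a vector `a`. -/
def translateSet {d : ℕ} (T : Set (EuclideanSpace ℝ (Fin d)))
    (a : EuclideanSpace ℝ (Fin d)) : Set (EuclideanSpace ℝ (Fin d)) :=
  (fun x => x + a) '' T

lemma patch_reach {d : ℕ} (T : Set (EuclideanSpace ℝ (Fin d)))
    (b a : EuclideanSpace ℝ (Fin d)) (r : ℝ) (hr : 0 < r) :
    ∀ x ∈ patch (translateSet T b) r, ∃ y ∈ patch (translateSet T a) r,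
      dist x y ≤ 2 * ‖b - a‖ := by
  intro x hx
  have hba : (0 : ℝ) ≤ ‖b - a‖ := norm_nonneg _
  rcases hx with hx | hx
  · obtain ⟨hxball, t, ht, rfl⟩ := hx
    rw [Metric.mem_closedBall, dist_zero_right] at hxball
    set z := t + a with hzdef
    have hzmem : z ∈ translateSet T a := ⟨t, ht, rfl⟩
    have hdistz : dist (t + b) z = ‖b - a‖ := by
      rw [hzdef, dist_eq_norm]
      congr 1
      abel
    by_cases hzr : ‖z‖ ≤ r
    · refine ⟨z, Or.inl ⟨?_, hzmem⟩, by rw [hdistz]; linarith⟩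
      rw [Metric.mem_closedBall, dist_zero_right]
      exact hzr
    · push_neg at hzr
      have hzpos : 0 < ‖z‖ := lt_trans hr hzr
      refine ⟨(r / ‖z‖) • z, Or.inr ?_, ?_⟩
      · rw [mem_sphere_zero_iff_norm, norm_smul, Real.norm_eq_abs,
          abs_of_pos (div_pos hr hzpos), div_mul_cancel₀ _ (ne_of_gt hzpos)]
      · have h1 : dist z ((r / ‖z‖) • z) = ‖z‖ - r := by
          rw [dist_eq_norm]
          have : z - (r / ‖z‖) • z = (1 - r / ‖z‖) • z := by
            rw [sub_smul, one_smul]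
          rw [this, norm_smul, Real.norm_eq_abs, abs_of_nonneg, sub_mul, one_mul,
            div_mul_cancel₀ _ (ne_of_gt hzpos)]
          rw [sub_nonneg]
          exact (div_le_one hzpos).mpr (le_of_lt hzr)
        have h2 : ‖z‖ ≤ r + ‖b - a‖ := by
          have : z = (t + b) - (b - a) := by rw [hzdef]; abel
          calc ‖z‖ = ‖(t + b) - (b - a)‖ := by rw [← this]
            _ ≤ ‖t + b‖ + ‖b - a‖ := norm_sub_le _ _
            _ ≤ r + ‖b - a‖ := by linarith
        calc dist (t + b) ((r / ‖z‖) • z) ≤ dist (t + b) z + dist z ((r / ‖z‖) • z) :=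
              dist_triangle _ _ _
          _ = ‖b - a‖ + (‖z‖ - r) := by rw [hdistz, h1]
          _ ≤ 2 * ‖b - a‖ := by linarith
  · exact ⟨x, Or.inr hx, by simp [hba]⟩

lemma patch_hausdorff {d : ℕ} (T : Set (EuclideanSpace ℝ (Fin d)))
    (b a : EuclideanSpace ℝ (Fin d)) (r : ℝ) (hr : 0 < r) :
    Metric.hausdorffDist (patch (translateSet T b) r) (patch (translateSet T a) r)
      ≤ 2 * ‖b - a‖ := by
  apply Metric.hausdorffDist_le_of_mem_dist
  · positivity
  · exact patch_reach T b a r hr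
  · have := patch_reach T a b r hr
    rw [norm_sub_rev] at this
    exact this

/-- For a closed subset `T` of `ℝ^d`, the map `a ↦ T + a` is continuous from `ℝ^d`
to the space of closed subsets of `ℝ^d` equipped with the pattern metric `D`. -/
theorem translation_continuous (d : ℕ) (T : Set (EuclideanSpace ℝ (Fin d)))
    (hT : IsClosed T) :
    ∀ a : EuclideanSpace ℝ (Fin d), ∀ ε > (0 : ℝ), ∃ δ > (0 : ℝ),
      ∀ b : EuclideanSpace ℝ (Fin d), ‖b - a‖ < δ →
        patternDist (translateSet T b) (translateSet T a) < ε := by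
  intro a ε hε
  set r : ℝ := max 1 (2 / ε) with hrdef
  have hr1 : (1 : ℝ) ≤ r := le_max_left _ _
  have hr : 0 < r := lt_of_lt_of_le one_pos hr1
  have hrε : 1 / (r + 1) < ε := by
    rw [div_lt_iff₀ (by linarith)]
    have h2 : 2 / ε ≤ r := le_max_right _ _
    have : 2 / ε * ε = 2 := div_mul_cancel₀ _ (ne_of_gt hε)
    nlinarith
  refine ⟨1 / (4 * r), by positivity, fun b hb => ?_⟩
  have hH : Metric.hausdorffDist (patch (translateSet T b) r)
      (patch (translateSet T a) r) < 1 / r := by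
    have := patch_hausdorff T b a r hr
    have h4 : 2 * ‖b - a‖ < 2 * (1 / (4 * r)) := by linarith
    have h5 : 2 * (1 / (4 * r)) < 1 / r := by
      rw [mul_one_div, div_lt_div_iff₀ (by positivity) hr]
      nlinarith
    linarith
  have hmem : 1 / (r + 1) ∈ {s : ℝ | ∃ r' : ℝ, 0 < r' ∧ s = 1 / (r' + 1) ∧
      Metric.hausdorffDist (patch (translateSet T b) r')
        (patch (translateSet T a) r') < 1 / r'} := ⟨r, hr, rfl, hH⟩
  have hbdd : BddBelow {s : ℝ | ∃ r' : ℝ, 0 < r' ∧ s = 1 / (r' + 1) ∧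
      Metric.hausdorffDist (patch (translateSet T b) r')
        (patch (translateSet T a) r') < 1 / r'} := by
    refine ⟨0, fun s hs => ?_⟩
    obtain ⟨r', hr', rfl, -⟩ := hs
    positivity
  calc patternDist (translateSet T b) (translateSet T a) ≤ 1 / (r + 1) :=
        csInf_le hbdd hmem
    _ < ε := hrε
end

section
/- Let Λ be a lattice of full rank N in ℝ^N, E a linear subspace with E ∩ Λ = {0}, E⊥ a complementary subspace, π: ℝ^N → E and π⊥: ℝ^N → E⊥ the associated projections, and K ⊆ E⊥ compact, and let P(K) = {π(x) : x ∈ Λ, π⊥(x) ∈ K} be the projection point pattern. If π is injective on Λ and K is compact, then P(K) is a discrete closed subset of E. -/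
/-- A set in a metric space whose intersection with every closed unit ball is finite
is closed and all its points are isolated. -/
lemma locallyFinite_closed_discrete {X : Type*} [MetricSpace X] (S : Set X)
    (h : ∀ y : X, (S ∩ Metric.closedBall y 1).Finite) :
    IsClosed S ∧ ∀ y ∈ S, ∃ ε > (0:ℝ), ∀ z ∈ S, dist z y < ε → z = y := by
  have hclosed : ∀ (T : Set X), (∀ y : X, (T ∩ Metric.closedBall y 1).Finite) → IsClosed T := by
    intro T hT
    rw [← closure_subset_iff_isClosed]
    intro y hy
    have h1 : y ∈ Metric.ball y 1 ∩ closure T := ⟨Metric.mem_ball_self one_pos, hy⟩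
    have h2 : y ∈ closure (Metric.ball y 1 ∩ T) := Metric.isOpen_ball.inter_closure h1
    have h3 : y ∈ closure (T ∩ Metric.closedBall y 1) := by
      refine closure_mono ?_ h2
      intro z hz; exact ⟨hz.2, Metric.ball_subset_closedBall hz.1⟩
    exact ((hT y).isClosed.closure_subset h3).1
  refine ⟨hclosed S h, ?_⟩
  intro y hy
  have hS' : IsClosed (S \ {y}) := by
    apply hclosed
    intro z
    exact (h z).subset (fun w hw => ⟨hw.1.1, hw.2⟩)
  have hyn : y ∈ (S \ {y})ᶜ := by simp
  obtain ⟨ε, hε, hball⟩ := Metric.isOpen_iff.1 hS'.isOpen_compl y hyn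
  refine ⟨ε, hε, fun z hz hdz => ?_⟩
  by_contra hne
  exact hball (Metric.mem_ball.2 hdz) ⟨hz, hne⟩

/-- Let `Λ` be a full-rank lattice in `ℝ^N` (a discrete subgroup whose real span is
everything), `E` a linear subspace with `E ∩ Λ = {0}`, `F = E⊥` a complementary
subspace, `π`, `π⊥` the projections onto `E`, `F`, and `K ⊆ F` compact. If `π` is
injective on `Λ` then the projection point pattern
`P(K) = {π(x) : x ∈ Λ, π⊥(x) ∈ K}` is a closed and discrete subset of `E`. -/
theorem projection_pattern_closed_discrete (N : ℕ)
    (Λ : AddSubgroup (EuclideanSpace ℝ (Fin N)))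
    (hΛdisc : DiscreteTopology Λ)
    (hΛfull : Submodule.span ℝ (Λ : Set (EuclideanSpace ℝ (Fin N))) = ⊤)
    (E F : Submodule ℝ (EuclideanSpace ℝ (Fin N)))
    (hEF : IsCompl E F)
    (hEΛ : (E : Set (EuclideanSpace ℝ (Fin N))) ∩ Λ = {0})
    (K : Set F) (hK : IsCompact K)
    (hinj : Set.InjOn (fun x => E.linearProjOfIsCompl F hEF x)
      (Λ : Set (EuclideanSpace ℝ (Fin N)))) :
    IsClosed {y : E | ∃ x ∈ Λ, E.linearProjOfIsCompl F hEF x = y ∧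
        F.linearProjOfIsCompl E hEF.symm x ∈ K} ∧
    ∀ y ∈ {y : E | ∃ x ∈ Λ, E.linearProjOfIsCompl F hEF x = y ∧
        F.linearProjOfIsCompl E hEF.symm x ∈ K},
      ∃ ε > (0 : ℝ), ∀ z ∈ {y : E | ∃ x ∈ Λ, E.linearProjOfIsCompl F hEF x = y ∧
        F.linearProjOfIsCompl E hEF.symm x ∈ K}, dist z y < ε → z = y := by
  set π : EuclideanSpace ℝ (Fin N) →ₗ[ℝ] E := E.linearProjOfIsCompl F hEF with hπ
  set π' : EuclideanSpace ℝ (Fin N) →ₗ[ℝ] F := F.linearProjOfIsCompl E hEF.symm with hπ'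
  have hπc : Continuous π := π.continuous_of_finiteDimensional
  have hπ'c : Continuous π' := π'.continuous_of_finiteDimensional
  have hΛclosed : IsClosed (Λ : Set (EuclideanSpace ℝ (Fin N))) :=
    AddSubgroup.isClosed_of_discrete
  apply locallyFinite_closed_discrete
  intro y
  set T : Set (EuclideanSpace ℝ (Fin N)) :=
    ((Λ : Set (EuclideanSpace ℝ (Fin N))) ∩ π ⁻¹' (Metric.closedBall y 1)) ∩ π' ⁻¹' K with hT
  have hTclosed : IsClosed T :=
    (hΛclosed.inter (Metric.isClosed_closedBall.preimage hπc)).inter (hK.isClosed.preimage hπ'c)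
  have hC : IsCompact ((fun p : E × F => (p.1 : EuclideanSpace ℝ (Fin N)) + (p.2 : EuclideanSpace ℝ (Fin N))) ''
      ((Metric.closedBall y 1) ×ˢ K)) :=
    ((isCompact_closedBall y 1).prod hK).image
      ((continuous_subtype_val.comp continuous_fst).add
        (continuous_subtype_val.comp continuous_snd))
  have hsub : T ⊆ (fun p : E × F => (p.1 : EuclideanSpace ℝ (Fin N)) + (p.2 : EuclideanSpace ℝ (Fin N))) ''
      ((Metric.closedBall y 1) ×ˢ K) := by
    rintro x ⟨⟨hxΛ, hxball⟩, hxK⟩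
    exact ⟨(π x, π' x), ⟨hxball, hxK⟩,
      Submodule.projection_add_projection_eq_self hEF x⟩
  have hTcpt : IsCompact T := hC.of_isClosed_subset hTclosed hsub
  have hTdisc : DiscreteTopology T := by
    refine DiscreteTopology.of_subset (s := (Λ : Set (EuclideanSpace ℝ (Fin N)))) hΛdisc ?_
    intro x hx; exact hx.1.1
  have hTfin : T.Finite := hTcpt.finite (isDiscrete_iff_discreteTopology.mpr hTdisc)
  refine (hTfin.image π).subset ?_
  rintro z ⟨⟨x, hx, rfl, hk⟩, hzball⟩
  exact ⟨x, ⟨⟨hx, hzball⟩, hk⟩, rfl⟩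
end
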